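/- The circular universality index of w is at most ι(w) + 1: if w has universality index k, then no conjugate of w is (k+2)-universal. -/

import Mathlib

/-!
If `y ++ x` is `(k+2)`-universal, greedily cut it into `k+2` consecutive factors each containing
every letter (the arch factorization). At most one of these factors straddles the border between
`y` and `x`, so `y` is `i`-universal and `x` is `j`-universal with `i + j = k + 1`, and then
`x ++ y` is `(k+1)`-universal.
-/

namespace List

variable {α : Type*}

def IsUniversal (k : ℕ) (w : List α) : Prop :=
  ∀ u : List α, u.length = k → u.Sublist w

theorem isUniversal_zero (w : List α) : w.IsUniversal 0 := fun u hu => by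
  rw [length_eq_zero_iff.mp hu]
  exact nil_sublist w

theorem isUniversal_of_isEmpty [IsEmpty α] (k : ℕ) (w : List α) : w.IsUniversal k
  | [], _ => nil_sublist w
  | a :: _, _ => isEmptyElim a

theorem isUniversal_one_of_forall_mem {w : List α} (h : ∀ a, a ∈ w) : w.IsUniversal 1 :=
  fun u hu => by
    obtain ⟨a, rfl⟩ := length_eq_one_iff.mp hu
    exact singleton_sublist.mpr (h a)

theorem IsUniversal.mono {k : ℕ} {v w : List α} (h : v.IsUniversal k) (hvw : v.Sublist w) :
    w.IsUniversal k :=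
  fun u hu => (h u hu).trans hvw

theorem IsUniversal.append {i j : ℕ} {a b : List α} (ha : a.IsUniversal i) (hb : b.IsUniversal j) :
    (a ++ b).IsUniversal (i + j) := fun u hu => by
  rw [← take_append_drop i u]
  exact (ha _ (by simp [hu])).append (hb _ (by simp [hu]))

/-- Cutting `v` after the first position by which every letter of `S` has occurred leaves a
suffix in which every `u` of length `n` still occurs. -/
theorem exists_append_of_forall_cons_sublist {n : ℕ} :
    ∀ (v : List α) (S : Set α), S.Nonempty →
      (∀ c ∈ S, ∀ u : List α, u.length = n → (c :: u).Sublist v) →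
      ∃ p q, v = p ++ q ∧ (∀ c ∈ S, c ∈ p) ∧ q.IsUniversal n
  | [], _, ⟨c, hc⟩, h => absurd (h c hc (replicate n c) length_replicate) (by simp)
  | a :: v, S, hS, h => by
    by_cases hSa : S ⊆ {a}
    · refine ⟨[a], v, rfl, fun c hc => mem_singleton.mpr (hSa hc), fun u hu => ?_⟩
      obtain ⟨c, hc⟩ := hS
      rw [show c = a from hSa hc] at hc
      exact cons_sublist_cons.mp (h a hc u hu)
    · have hS' : (S \ {a}).Nonempty := Set.sdiff_nonempty.mpr hSa
      have h' : ∀ c ∈ S \ {a}, ∀ u : List α, u.length = n → (c :: u).Sublist v :=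
        fun c ⟨hc, hca⟩ u hu => (h c hc u hu).of_cons_of_ne hca
      obtain ⟨p, q, rfl, hp, hq⟩ := exists_append_of_forall_cons_sublist v (S \ {a}) hS' h'
      refine ⟨a :: p, q, rfl, fun c hc => ?_, hq⟩
      by_cases hca : c = a
      · simp [hca]
      · exact mem_cons_of_mem a (hp c ⟨hc, hca⟩)

theorem IsUniversal.exists_append {n : ℕ} {v : List α} (h : v.IsUniversal (n + 1)) :
    ∃ p q, v = p ++ q ∧ p.IsUniversal 1 ∧ q.IsUniversal n := by
  cases isEmpty_or_nonempty α with
  | inl _ => exact ⟨[], v, rfl, isUniversal_of_isEmpty 1 [], isUniversal_of_isEmpty n v⟩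
  | inr _ =>
    obtain ⟨p, q, hv, hp, hq⟩ := exists_append_of_forall_cons_sublist v Set.univ Set.univ_nonempty
      (fun c _ u hu => h (c :: u) (by rw [length_cons, hu]))
    exact ⟨p, q, hv, isUniversal_one_of_forall_mem fun a => hp a trivial, hq⟩

theorem IsUniversal.exists_of_append :
    ∀ {n : ℕ} {y x : List α}, (y ++ x).IsUniversal (n + 1) →
      ∃ i j, i + j = n ∧ y.IsUniversal i ∧ x.IsUniversal j
  | 0, y, x, _ => ⟨0, 0, rfl, isUniversal_zero y, isUniversal_zero x⟩
  | n + 1, y, x, h => by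
    obtain ⟨p, q, hyx, hp, hq⟩ := h.exists_append
    rcases append_eq_append_iff.mp hyx with ⟨y', rfl, rfl⟩ | ⟨y', rfl, rfl⟩
    · exact ⟨0, n + 1, by omega, isUniversal_zero _, hq.mono (sublist_append_right y' q)⟩
    · obtain ⟨i, j, hij, hy', hx⟩ := hq.exists_of_append
      exact ⟨1 + i, j, by omega, hp.append hy', hx⟩

end List

theorem conjugate_not_universal_general {α : Type*} (w : List α) (k : ℕ)
    (hk1 : ¬ ∀ u : List α, u.length = k + 1 → u.Sublist w) :
    ∀ x y : List α, w = x ++ y →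
      ¬ ∀ u : List α, u.length = k + 2 → u.Sublist (y ++ x) := by
  intro x y hw hyx
  obtain ⟨i, j, hij, hy, hx⟩ := List.IsUniversal.exists_of_append hyx
  have hxy : (x ++ y).IsUniversal (j + i) := hx.append hy
  rw [← hw, show j + i = k + 1 by omega] at hxy
  exact hk1 hxy

/-- If w has universality index k (w is k-universal but not (k+1)-universal),
then no conjugate of w is (k+2)-universal. -/
theorem conjugate_not_universal {α : Type*} (w : List α) (k : ℕ)
    (hk : ∀ u : List α, u.length = k → u.Sublist w)
    (hk1 : ¬ ∀ u : List α, u.length = k + 1 → u.Sublist w) :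
    ∀ x y : List α, w = x ++ y →
      ¬ ∀ u : List α, u.length = k + 2 → u.Sublist (y ++ x) :=
  conjugate_not_universal_general w k hk1
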